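/- The maximal-volume centered ellipsoid contained in the product of balls B_X^n(√ħ) × B_P^n(√ħ) ⊆ ℝ^{2n} is the ball B^{2n}(√ħ): if Q is a real symmetric positive definite 2n×2n matrix and the ellipsoid E = {z ∈ ℝ^{2n} : Qz·z ≤ ħ} satisfies E ⊆ B_X^n(√ħ) × B_P^n(√ħ), then the Lebesgue measure of E is at most that of B^{2n}(√ħ), with equality if and only if E = B^{2n}(√ħ). -/

import Mathlib

open Matrix ComplexOrder MeasureTheory

noncomputable section

/-- Phase space ℝ^{2n} ≃ ℝⁿ × ℝⁿ, with coordinates z = (x,p). -/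
abbrev PS (n : ℕ) := Fin n ⊕ Fin n → ℝ

/-- The standard symplectic matrix J = [[0, I], [-I, 0]]. -/
def Jmat (n : ℕ) : Matrix (Fin n ⊕ Fin n) (Fin n ⊕ Fin n) ℝ :=
  Matrix.fromBlocks 0 1 (-1) 0

/-- The standard symplectic form ω(z,z′) = (Jz)·z′. -/
def symp (n : ℕ) (z z' : PS n) : ℝ := (Jmat n).mulVec z ⬝ᵥ z'

/-- The symplectic group Sp(n) = {S : SᵀJS = J}. -/
def Sp (n : ℕ) : Set (Matrix (Fin n ⊕ Fin n) (Fin n ⊕ Fin n) ℝ) :=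
  {S | Sᵀ * Jmat n * S = Jmat n}

/-- Symplectic ℏ-polar dual Ω^{ℏ,ω} = {z′ : sup_{z∈Ω} ω(z,z′) ≤ ℏ}. -/
def sympDual (n : ℕ) (ℏ : ℝ) (Ω : Set (PS n)) : Set (PS n) :=
  {z' | ∀ z ∈ Ω, symp n z z' ≤ ℏ}

/-- The closed Euclidean ball B^{2n}(√ℏ) of radius √ℏ centered at 0. -/
def ball2n (n : ℕ) (ℏ : ℝ) : Set (PS n) := {z | z ⬝ᵥ z ≤ ℏ}

/-- The covariance ellipsoid Ω_Σ = {z : (1/2)Σ⁻¹z·z ≤ 1}. -/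
def covEll (n : ℕ) (Sig : Matrix (Fin n ⊕ Fin n) (Fin n ⊕ Fin n) ℝ) : Set (PS n) :=
  {z | (1 / 2 : ℝ) * (Sig⁻¹.mulVec z ⬝ᵥ z) ≤ 1}

/-!
Rescaling points of the ellipsoid `E = {Qz·z ≤ ℏ}` to its boundary turns the inclusion
`E ⊆ B_X × B_P` into the Loewner inequalities `Q ≥ diag(1, 0)` and `Q ≥ diag(0, 1)`.
Writing `Q = [[A, B], [Bᵀ, D]]`, the first gives `A ≥ 1` and the second says that the Schur
complement `D - Bᵀ A⁻¹ B` is `≥ 1`, so `det Q = det A · det (D - Bᵀ A⁻¹ B) ≥ 1`. If `det Q = 1`,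
then `A = 1`, symmetrically `D = 1`, and the Schur complement bound becomes `-Bᵀ B ≥ 0`, so
`B = 0` and `Q = 1`. Since `E` is the preimage of the ball under `√Q`, its volume is
`(det Q)^(-1/2)` times that of the ball.
-/

namespace Matrix

theorem PosSemidef.det_one_add {ι : Type*} [Fintype ι] [DecidableEq ι] {N : Matrix ι ι ℝ}
    (hN : N.PosSemidef) : (1 + N).det = ∏ i, (1 + hN.1.eigenvalues i) := by
  conv_lhs => rw [hN.1.spectral_theorem,
    ← map_one (Unitary.conjStarAlgAut ℝ _ hN.1.eigenvectorUnitary), ← map_add,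
    Unitary.conjStarAlgAut_apply, det_mul_comm, ← mul_assoc, Unitary.coe_star_mul_self, one_mul,
    ← diagonal_one, diagonal_add, det_diagonal]
  simp

theorem PosSemidef.posDef_of_sub_one {ι : Type*} [Fintype ι] [DecidableEq ι] {M : Matrix ι ι ℝ}
    (h : (M - 1).PosSemidef) : M.PosDef := by
  simpa using PosDef.one.add_posSemidef h

theorem one_le_det_of_posSemidef_sub_one {ι : Type*} [Fintype ι] [DecidableEq ι]
    {M : Matrix ι ι ℝ} (h : (M - 1).PosSemidef) : 1 ≤ M.det := by
  rw [← add_sub_cancel 1 M, h.det_one_add]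
  exact Finset.one_le_prod fun i _ => le_add_of_nonneg_right (h.eigenvalues_nonneg i)

theorem eq_one_of_posSemidef_sub_one_of_det_le_one {ι : Type*} [Fintype ι] [DecidableEq ι]
    {M : Matrix ι ι ℝ} (h : (M - 1).PosSemidef) (hdet : M.det ≤ 1) : M = 1 := by
  by_contra hM
  obtain ⟨i, hi⟩ : ∃ i, h.1.eigenvalues i ≠ 0 := by
    by_contra! h0
    exact hM (sub_eq_zero.mp (h.1.eigenvalues_eq_zero_iff.mp (funext h0)))
  have : ∏ _i : ι, (1 : ℝ) < ∏ i, (1 + h.1.eigenvalues i) :=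
    Finset.prod_lt_prod (fun _ _ => one_pos)
      (fun j _ => le_add_of_nonneg_right (h.eigenvalues_nonneg j))
      ⟨i, Finset.mem_univ i, lt_add_of_pos_right 1 ((h.eigenvalues_nonneg i).lt_of_ne' hi)⟩
  rw [← h.det_one_add, add_sub_cancel, Finset.prod_const_one] at this
  exact hdet.not_gt this

theorem fromBlocks_sub {l m n o R : Type*} [Sub R] (A : Matrix n l R) (B : Matrix n m R)
    (C : Matrix o l R) (D : Matrix o m R) (A' : Matrix n l R) (B' : Matrix n m R)
    (C' : Matrix o l R) (D' : Matrix o m R) :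
    fromBlocks A B C D - fromBlocks A' B' C' D' =
      fromBlocks (A - A') (B - B') (C - C') (D - D') := by
  ext (_ | _) (_ | _) <;> rfl

theorem PosSemidef.fromBlocks_swap {m n : Type*} {A : Matrix m m ℝ} {B : Matrix m n ℝ}
    {C : Matrix n m ℝ} {D : Matrix n n ℝ} (h : (fromBlocks A B C D).PosSemidef) :
    (fromBlocks D C B A).PosSemidef := by
  simpa [fromBlocks_submatrix_sum_swap_sum_swap] using h.submatrix Sum.swap

theorem posSemidef_sub_one_of_fromBlocks {m n : Type*} [DecidableEq m] {A : Matrix m m ℝ}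
    {B : Matrix m n ℝ} {C : Matrix n m ℝ} {D : Matrix n n ℝ}
    (h : (fromBlocks (A - 1) B C D).PosSemidef) : (A - 1).PosSemidef :=
  toBlocks_fromBlocks₁₁ (A - 1) B C D ▸ h.submatrix Sum.inl

theorem isHermitian_fromBlocks_one_zero {m n : Type*} [DecidableEq m] :
    (fromBlocks (1 : Matrix m m ℝ) 0 0 (0 : Matrix n n ℝ)).IsHermitian :=
  isHermitian_one.fromBlocks (by simp) isHermitian_zero

theorem isHermitian_fromBlocks_zero_one {m n : Type*} [DecidableEq n] :
    (fromBlocks (0 : Matrix m m ℝ) 0 0 (1 : Matrix n n ℝ)).IsHermitian :=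
  isHermitian_zero.fromBlocks (by simp) isHermitian_one

theorem fromBlocks_one_zero_mulVec_dotProduct {m n : Type*} [Fintype m] [Fintype n]
    [DecidableEq m] (z : m ⊕ n → ℝ) :
    fromBlocks (1 : Matrix m m ℝ) 0 0 (0 : Matrix n n ℝ) *ᵥ z ⬝ᵥ z =
      (z ∘ Sum.inl) ⬝ᵥ (z ∘ Sum.inl) := by
  rw [← Sum.elim_comp_inl_inr z, fromBlocks_mulVec, sumElim_dotProduct_sumElim]
  simp

theorem fromBlocks_zero_one_mulVec_dotProduct {m n : Type*} [Fintype m] [Fintype n]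
    [DecidableEq n] (z : m ⊕ n → ℝ) :
    fromBlocks (0 : Matrix m m ℝ) 0 0 (1 : Matrix n n ℝ) *ᵥ z ⬝ᵥ z =
      (z ∘ Sum.inr) ⬝ᵥ (z ∘ Sum.inr) := by
  rw [← Sum.elim_comp_inl_inr z, fromBlocks_mulVec, sumElim_dotProduct_sumElim]
  simp

theorem exists_fromBlocks_of_posSemidef_sub_fromBlocks {m n : Type*} [DecidableEq m]
    [DecidableEq n] {Q : Matrix (m ⊕ n) (m ⊕ n) ℝ}
    (h₁ : (Q - fromBlocks 1 0 0 0).PosSemidef) (h₂ : (Q - fromBlocks 0 0 0 1).PosSemidef) :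
    ∃ (A : Matrix m m ℝ) (B : Matrix m n ℝ) (D : Matrix n n ℝ), Q = fromBlocks A B Bᴴ D ∧
      (fromBlocks (A - 1) B Bᴴ D).PosSemidef ∧ (fromBlocks A B Bᴴ (D - 1)).PosSemidef := by
  obtain ⟨A, B, C, D, rfl⟩ : ∃ A B C D, Q = fromBlocks A B C D :=
    ⟨_, _, _, _, (fromBlocks_toBlocks Q).symm⟩
  have hQ : (fromBlocks A B C D).IsHermitian := by
    simpa only [sub_add_cancel] using h₁.1.add isHermitian_fromBlocks_one_zero
  obtain ⟨-, rfl, -⟩ := isHermitian_fromBlocks_iff.mp hQ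
  rw [fromBlocks_sub] at h₁ h₂
  exact ⟨A, B, D, rfl, by simpa using h₁, by simpa using h₂⟩

section Blocks

variable {m n : Type*} [Fintype m] [Fintype n] [DecidableEq m] [DecidableEq n]
  {A : Matrix m m ℝ} {B : Matrix m n ℝ} {D : Matrix n n ℝ}

theorem det_fromBlocks_swap {C : Matrix n m ℝ} :
    (fromBlocks D C B A).det = (fromBlocks A B C D).det := by
  rw [← det_submatrix_equiv_self (Equiv.sumComm m n), Equiv.sumComm_apply,
    fromBlocks_submatrix_sum_swap_sum_swap]

theorem posSemidef_schur_sub_one (hA : (A - 1).PosSemidef)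
    (h : (fromBlocks A B Bᴴ (D - 1)).PosSemidef) : (D - Bᴴ * A⁻¹ * B - 1).PosSemidef := by
  have := hA.posDef_of_sub_one.isUnit.invertible
  rw [sub_right_comm]
  exact (PosDef.fromBlocks₁₁ B (D - 1) hA.posDef_of_sub_one).mp h

theorem det_le_det_fromBlocks (hA : (A - 1).PosSemidef)
    (h : (fromBlocks A B Bᴴ (D - 1)).PosSemidef) : A.det ≤ (fromBlocks A B Bᴴ D).det := by
  have := hA.posDef_of_sub_one.isUnit.invertible
  rw [det_fromBlocks₁₁, invOf_eq_nonsing_inv]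
  exact le_mul_of_one_le_right hA.posDef_of_sub_one.det_pos.le
    (one_le_det_of_posSemidef_sub_one (posSemidef_schur_sub_one hA h))

theorem one_le_det_fromBlocks (h₁ : (fromBlocks (A - 1) B Bᴴ D).PosSemidef)
    (h₂ : (fromBlocks A B Bᴴ (D - 1)).PosSemidef) : 1 ≤ (fromBlocks A B Bᴴ D).det :=
  (one_le_det_of_posSemidef_sub_one (posSemidef_sub_one_of_fromBlocks h₁)).trans
    (det_le_det_fromBlocks (posSemidef_sub_one_of_fromBlocks h₁) h₂)

theorem fromBlocks_eq_one_of_det_le_one (h₁ : (fromBlocks (A - 1) B Bᴴ D).PosSemidef)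
    (h₂ : (fromBlocks A B Bᴴ (D - 1)).PosSemidef) (hdet : (fromBlocks A B Bᴴ D).det ≤ 1) :
    fromBlocks A B Bᴴ D = 1 := by
  have hA := posSemidef_sub_one_of_fromBlocks h₁
  have hD := posSemidef_sub_one_of_fromBlocks h₂.fromBlocks_swap
  have hA1 : A = 1 := eq_one_of_posSemidef_sub_one_of_det_le_one hA
    ((det_le_det_fromBlocks hA h₂).trans hdet)
  have hD1 : D = 1 := eq_one_of_posSemidef_sub_one_of_det_le_one hD
    ((det_le_det_fromBlocks (B := Bᴴ) hD (by simpa using h₁.fromBlocks_swap)).trans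
      (by rwa [conjTranspose_conjTranspose, det_fromBlocks_swap]))
  have hBB : (-(Bᴴ * B)).PosSemidef := by
    simpa [hA1, hD1] using posSemidef_schur_sub_one hA h₂
  have hB : B = 0 := by
    rw [← conjTranspose_mul_self_eq_zero, ← (posSemidef_conjTranspose_mul_self B).trace_eq_zero_iff]
    have := hBB.trace_nonneg
    have := (posSemidef_conjTranspose_mul_self B).trace_nonneg
    rw [trace_neg] at *
    linarith
  rw [hA1, hD1, hB, conjTranspose_zero, fromBlocks_one]

theorem one_le_det_of_posSemidef_sub_fromBlocks {Q : Matrix (m ⊕ n) (m ⊕ n) ℝ}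
    (h₁ : (Q - fromBlocks 1 0 0 0).PosSemidef) (h₂ : (Q - fromBlocks 0 0 0 1).PosSemidef) :
    1 ≤ Q.det := by
  obtain ⟨A, B, D, rfl, h₁, h₂⟩ := exists_fromBlocks_of_posSemidef_sub_fromBlocks h₁ h₂
  exact one_le_det_fromBlocks h₁ h₂

theorem eq_one_of_posSemidef_sub_fromBlocks_of_det_le_one {Q : Matrix (m ⊕ n) (m ⊕ n) ℝ}
    (h₁ : (Q - fromBlocks 1 0 0 0).PosSemidef) (h₂ : (Q - fromBlocks 0 0 0 1).PosSemidef)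
    (hdet : Q.det ≤ 1) : Q = 1 := by
  obtain ⟨A, B, D, rfl, h₁, h₂⟩ := exists_fromBlocks_of_posSemidef_sub_fromBlocks h₁ h₂
  exact fromBlocks_eq_one_of_det_le_one h₁ h₂ hdet

end Blocks

variable {ι : Type*} [Fintype ι]

theorem posSemidef_sub_of_setOf_subset {Q P : Matrix ι ι ℝ} (hQ : Q.PosDef) (hP : P.IsHermitian)
    {c : ℝ} (hc : 0 < c) (h : {z | Q *ᵥ z ⬝ᵥ z ≤ c} ⊆ {z | P *ᵥ z ⬝ᵥ z ≤ c}) :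
    (Q - P).PosSemidef := by
  refine .of_dotProduct_mulVec_nonneg (hQ.1.sub hP) fun z => ?_
  rw [star_trivial, sub_mulVec, dotProduct_sub, sub_nonneg, dotProduct_comm z, dotProduct_comm z]
  rcases eq_or_ne z 0 with rfl | hz
  · simp
  have hq : 0 < Q *ᵥ z ⬝ᵥ z := by simpa [dotProduct_comm] using hQ.dotProduct_mulVec_pos hz
  -- rescale `z` onto the boundary of the ellipsoid
  set t := √(c / (Q *ᵥ z ⬝ᵥ z))
  have ht : t ^ 2 * (Q *ᵥ z ⬝ᵥ z) = c := by
    rw [Real.sq_sqrt (by positivity), div_mul_cancel₀ _ hq.ne']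
  have hquad : ∀ M : Matrix ι ι ℝ, M *ᵥ (t • z) ⬝ᵥ (t • z) = t ^ 2 * (M *ᵥ z ⬝ᵥ z) := by
    intro M
    rw [mulVec_smul, smul_dotProduct, dotProduct_smul, smul_eq_mul, smul_eq_mul, ← mul_assoc, sq]
  have hmem := @h (t • z) (by simp only [Set.mem_ofPred_eq, hquad, ht, le_refl])
  simp only [Set.mem_ofPred_eq, hquad] at hmem
  exact le_of_mul_le_mul_left (ht ▸ hmem) (by positivity)

variable [DecidableEq ι]

theorem volume_setOf_mulVec_dotProduct_le {Q : Matrix ι ι ℝ} (hQ : Q.PosDef) (c : ℝ) :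
    volume {z : ι → ℝ | Q *ᵥ z ⬝ᵥ z ≤ c} =
      ENNReal.ofReal (√Q.det)⁻¹ * volume {z : ι → ℝ | z ⬝ᵥ z ≤ c} := by
  open scoped MatrixOrder in
  set R := CFC.sqrt Q
  have hR : Rᵀ = R := (CFC.sqrt_nonneg Q).posSemidef.1
  have hRR : R * R = Q := CFC.sqrt_mul_sqrt_self Q hQ.posSemidef.nonneg
  have hdet : R.det = √Q.det := by simpa using hQ.posSemidef.det_sqrt
  have hset : {z : ι → ℝ | Q *ᵥ z ⬝ᵥ z ≤ c} = toLin' R ⁻¹' {z | z ⬝ᵥ z ≤ c} := by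
    ext z
    simp only [Set.mem_ofPred_eq, Set.mem_preimage, toLin'_apply, ← hRR, ← mulVec_mulVec]
    rw [dotProduct_comm, dotProduct_mulVec, ← mulVec_transpose, hR, dotProduct_comm]
  have hpos : 0 < R.det := hdet ▸ Real.sqrt_pos.mpr hQ.det_pos
  rw [hset, Measure.addHaar_preimage_linearMap _ (by rw [LinearMap.det_toLin']; exact hpos.ne'),
    LinearMap.det_toLin', hdet, abs_of_pos (inv_pos.mpr (hdet ▸ hpos))]

end Matrix

theorem volume_setOf_dotProduct_self_le {ι : Type*} [Fintype ι] {c : ℝ} (hc : 0 ≤ c) :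
    volume {z : ι → ℝ | z ⬝ᵥ z ≤ c} = volume (Metric.closedBall (0 : EuclideanSpace ℝ ι) √c) := by
  rw [← (PiLp.volume_preserving_toLp ι).measure_preimage measurableSet_closedBall.nullMeasurableSet]
  congr 1
  ext z
  simp only [Set.mem_ofPred_eq, Set.mem_preimage, mem_closedBall_zero_iff, EuclideanSpace.norm_eq]
  rw [Real.sqrt_le_sqrt_iff hc]
  simp [dotProduct, sq]

/-- The John ellipsoid of B_X^n(√ℏ) × B_P^n(√ℏ): any centered ellipsoid contained in the
product of balls has volume at most that of B^{2n}(√ℏ), with equality iff it equals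
B^{2n}(√ℏ). -/
theorem john_ellipsoid_product_of_balls (n : ℕ) (ℏ : ℝ) (hℏ : 0 < ℏ)
    (Q : Matrix (Fin n ⊕ Fin n) (Fin n ⊕ Fin n) ℝ) (hQ : Q.PosDef)
    (hE : {z : PS n | Q.mulVec z ⬝ᵥ z ≤ ℏ} ⊆
      {z : PS n | (z ∘ Sum.inl) ⬝ᵥ (z ∘ Sum.inl) ≤ ℏ ∧ (z ∘ Sum.inr) ⬝ᵥ (z ∘ Sum.inr) ≤ ℏ}) :
    volume {z : PS n | Q.mulVec z ⬝ᵥ z ≤ ℏ} ≤ volume (ball2n n ℏ) ∧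
    (volume {z : PS n | Q.mulVec z ⬝ᵥ z ≤ ℏ} = volume (ball2n n ℏ) ↔
      {z : PS n | Q.mulVec z ⬝ᵥ z ≤ ℏ} = ball2n n ℏ) := by
  have h₁ : (Q - fromBlocks 1 0 0 0).PosSemidef :=
    posSemidef_sub_of_setOf_subset hQ isHermitian_fromBlocks_one_zero hℏ fun z hz => by
      simpa only [Set.mem_ofPred_eq, fromBlocks_one_zero_mulVec_dotProduct] using (hE hz).1
  have h₂ : (Q - fromBlocks 0 0 0 1).PosSemidef :=
    posSemidef_sub_of_setOf_subset hQ isHermitian_fromBlocks_zero_one hℏ fun z hz => by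
      simpa only [Set.mem_ofPred_eq, fromBlocks_zero_one_mulVec_dotProduct] using (hE hz).2
  have hvol : volume {z : PS n | Q.mulVec z ⬝ᵥ z ≤ ℏ} =
      ENNReal.ofReal (√Q.det)⁻¹ * volume (ball2n n ℏ) :=
    volume_setOf_mulVec_dotProduct_le hQ ℏ
  have hball : volume (ball2n n ℏ) = volume (Metric.closedBall (0 : EuclideanSpace ℝ _) √ℏ) :=
    volume_setOf_dotProduct_self_le hℏ.le
  have hball_pos : volume (ball2n n ℏ) ≠ 0 :=
    hball ▸ (Metric.measure_closedBall_pos _ _ (Real.sqrt_pos.mpr hℏ)).ne'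
  have hball_fin : volume (ball2n n ℏ) ≠ ⊤ := hball ▸ measure_closedBall_lt_top.ne
  refine ⟨?_, fun heq => ?_, fun hset => by rw [hset]⟩
  · rw [hvol]
    refine mul_le_of_le_one_left' (ENNReal.ofReal_le_one.mpr (inv_le_one_of_one_le₀ ?_))
    exact Real.one_le_sqrt.mpr (one_le_det_of_posSemidef_sub_fromBlocks h₁ h₂)
  · rw [hvol, ENNReal.mul_eq_right hball_pos hball_fin, ENNReal.ofReal_eq_one, inv_eq_one,
      Real.sqrt_eq_one] at heq
    rw [eq_one_of_posSemidef_sub_fromBlocks_of_det_le_one h₁ h₂ heq.le]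
    simp [ball2n]
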